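/- arXiv:2004.11653 — 2 statements merged into one kernel-verified Lean document; each statement's English description precedes it below -/
import Mathlib

section
/- Let R ∈ 𝔗_a be reflexive and S a reflexive digraph such that #𝓗(G',R) ≤ #𝓗(G',S) for every G' ∈ 𝔗_a. Let G ∈ 𝔗_a, 𝓛 a set of subgraphs of G, and B := ⋃_{L ∈ 𝓛} A(L*). Then for every ξ ∈ 𝓜^𝓛(G,R): if the restriction of ι_ξ to B belongs to 𝓘^𝓛(G,S), then #𝓙^𝓛_{G,R}(ξ) ≤ #𝓙^𝓛_{G,S}(ξ). -/
/-- A finite digraph: a finite nonempty vertex set `V ⊆ ℕ` together with an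
arc set `A ⊆ V × V`. -/
structure Dgraph where
  V : Finset ℕ
  nonempty : V.Nonempty
  A : Finset (ℕ × ℕ)
  A_sub : ∀ p ∈ A, p.1 ∈ V ∧ p.2 ∈ V

namespace Dgraph

/-- The set of proper arcs of `G`, i.e. the arc set of `G*`. -/
def Astar (G : Dgraph) : Finset (ℕ × ℕ) := G.A.filter (fun p => p.1 ≠ p.2)

/-- `G` is reflexive. -/
def IsRefl (G : Dgraph) : Prop := ∀ v ∈ G.V, (v, v) ∈ G.A

/-- `p` is a path in `G` (a nonempty list of pairwise distinct vertices,
consecutive ones joined by arcs).  Its length as a path is `p.length - 1`. -/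
def IsPath (G : Dgraph) (p : List ℕ) : Prop :=
  p ≠ [] ∧ p.Nodup ∧ (∀ v ∈ p, v ∈ G.V) ∧ p.Chain' (fun v w => (v, w) ∈ G.A)

/-- `p` is a path in `G*`. -/
def IsPathStar (G : Dgraph) (p : List ℕ) : Prop :=
  p ≠ [] ∧ p.Nodup ∧ (∀ v ∈ p, v ∈ G.V) ∧ p.Chain' (fun v w => (v, w) ∈ G.A ∧ v ≠ w)

/-- `G*` contains a closed walk. -/
def HasClosedWalkStar (G : Dgraph) : Prop :=
  ∃ p : List ℕ, (∀ v ∈ p, v ∈ G.V) ∧ p.Chain' (fun v w => (v, w) ∈ G.A ∧ v ≠ w) ∧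
    2 ≤ p.length ∧ p.head? = p.getLast?

/-- membership in the class `𝔗ₐ`: `G*` is acyclic. -/
def MemTa (G : Dgraph) : Prop := ¬ G.HasClosedWalkStar

/-- The height of `G`: the maximal length of a path in `G`. -/
noncomputable def height (G : Dgraph) : ℕ :=
  sSup {n | ∃ p, G.IsPath p ∧ p.length = n + 1}

/-- The interval `[v,w]_G`. -/
def interval (G : Dgraph) (v w : ℕ) : Finset ℕ :=
  G.V.filter (fun z => (v, z) ∈ G.A ∧ (z, w) ∈ G.A)

/-- `ι(v,w)_G`, the cardinality of the interval `[v,w]_G`. -/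
def iota (G : Dgraph) (v w : ℕ) : ℕ := (G.interval v w).card

/-- The set `𝓗(G,H)` of homomorphisms from `G` to `H` (represented as total
maps `ℕ → ℕ`, normalized to `0` outside of `V(G)`). -/
def Hom (G H : Dgraph) : Set (ℕ → ℕ) :=
  {f | (∀ v ∈ G.V, f v ∈ H.V) ∧ (∀ p ∈ G.A, (f p.1, f p.2) ∈ H.A) ∧
    ∀ v, v ∉ G.V → f v = 0}

/-- The set `𝓢(G,H)` of strict homomorphisms from `G` to `H`. -/
def SHom (G H : Dgraph) : Set (ℕ → ℕ) :=
  {f ∈ Hom G H | ∀ p ∈ G.Astar, f p.1 ≠ f p.2}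

/-- `μ_ξ(G)`, for a homomorphism `ξ` from `G` into `H`. -/
def mu (G H : Dgraph) (f : ℕ → ℕ) : ℕ :=
  ∑ p ∈ G.Astar, H.iota (f p.1) (f p.2)

/-- `L` is a subgraph of `G`. -/
def Subgraph (L G : Dgraph) : Prop := L.V ⊆ G.V ∧ L.A ⊆ G.A

/-- Restriction of a map to a vertex set (normalized to `0` outside). -/
def restrict (X : Finset ℕ) (f : ℕ → ℕ) : ℕ → ℕ := fun x => if x ∈ X then f x else 0

/-- `𝓜(L,H)`: homomorphisms from `L` to `H` with maximal `μ`. -/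
def MSet (L H : Dgraph) : Set (ℕ → ℕ) :=
  {f ∈ Hom L H | ∀ g ∈ Hom L H, mu L H g ≤ mu L H f}

/-- `𝓜^𝓛(G,H)`. -/
def MLSet (G H : Dgraph) (𝓛 : Set Dgraph) : Set (ℕ → ℕ) :=
  {f ∈ Hom G H | ∀ L ∈ 𝓛, restrict L.V f ∈ MSet L H}

/-- `𝓙^𝓛_{G,H'}(ξ)` for `ξ ∈ 𝓗(G,H)`. -/
def JSet (G H H' : Dgraph) (𝓛 : Set Dgraph) (ξ : ℕ → ℕ) : Set (ℕ → ℕ) :=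
  {ζ ∈ Hom G H' | ∀ L ∈ 𝓛, ∀ p ∈ L.Astar,
    H'.iota (ζ p.1) (ζ p.2) = H.iota (ξ p.1) (ξ p.2)}

/-- The digraph `P_×` of a path `P = P_0, …, P_ℓ`: vertex set `{P_0,…,P_ℓ}`
and arcs `P_{i-1}P_i`. -/
def pathGraph (P : List ℕ) (h : P ≠ []) : Dgraph where
  V := P.toFinset
  nonempty := by
    obtain ⟨a, t, rfl⟩ := List.exists_cons_of_ne_nil h
    exact ⟨a, by simp⟩
  A := (P.zip P.tail).toFinset
  A_sub := by
    intro p hp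
    rw [List.mem_toFinset] at hp
    have h1 := List.of_mem_zip hp
    exact ⟨List.mem_toFinset.mpr h1.1, List.mem_toFinset.mpr (List.mem_of_mem_tail h1.2)⟩

/-- `𝓛(G)`: the set of the digraphs `P_×` for the paths `P` of length `h_G` in `G`. -/
def LSet (G : Dgraph) : Set Dgraph :=
  {D | ∃ (P : List ℕ) (h : P ≠ []), G.IsPath P ∧ P.length = G.height + 1 ∧
    D = pathGraph P h}

/-- The class `𝕽`: reflexive digraphs `R ∈ 𝔗ₐ` with
`𝓜^{𝓛(R)}(R,R) ∩ 𝓢(R,R) ≠ ∅`. -/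
def MemR (R : Dgraph) : Prop :=
  R.MemTa ∧ R.IsRefl ∧ (MLSet R R (LSet R) ∩ SHom R R).Nonempty

/-- `G` is a poset: reflexive, antisymmetric and transitive. -/
def IsPoset (G : Dgraph) : Prop :=
  G.IsRefl ∧ (∀ v w, (v, w) ∈ G.A → (w, v) ∈ G.A → v = w) ∧
    (∀ u v w, (u, v) ∈ G.A → (v, w) ∈ G.A → (u, w) ∈ G.A)

/-- The class `𝔗ₐ^{=n}`: digraphs in `𝔗ₐ` of height `n` in which every vertex
lies on a path of length `n`. -/
def MemTaEq (n : ℕ) (G : Dgraph) : Prop :=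
  G.MemTa ∧ G.height = n ∧ ∀ v ∈ G.V, ∃ p, G.IsPath p ∧ p.length = n + 1 ∧ v ∈ p

/-- A maximal path in `G`: no path in `G` properly contains its vertex set. -/
def MaximalPath (G : Dgraph) (P : List ℕ) : Prop :=
  G.IsPath P ∧ ∀ Q, G.IsPath Q → (∀ v ∈ P, v ∈ Q) → ∀ v ∈ Q, v ∈ P

end Dgraph

open Dgraph

/-!
Let `B` be the set of arcs covered by `𝓛` and `c = ι_ξ` on `B`. Attaching `kₐ` parallel 2-paths
`v → z → w` to each arc `a = vw ∈ B` yields a digraph in `𝔗ₐ` with exactly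
`Σ_{ζ ∈ 𝓗(G,H)} ∏ₐ ι_ζ(a)^{kₐ}` homomorphisms to `H`.

By μ-maximality of `ξ` (and of its counterpart in `𝓜^𝓛(G,S)`), every profile `d = ι_ζ|_B` of a
homomorphism into `R` or `S` satisfies `Σ_{a ∈ L*} dₐ ≤ Σ_{a ∈ L*} cₐ` for all `L ∈ 𝓛`. Strict
convexity of `exp` then puts `log c` outside the convex hull of the other log-profiles plus the
negative orthant, and a separating hyperplane, scaled and rounded up, gives exponents `k` with
`∏ d^k < ∏ c^k` for every profile `d ≠ c`. Applying the hypothesis to the digraphs built from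
`m • k` and letting `m → ∞` leaves only the homomorphisms with profile `c` on either side.
-/

open Filter Topology Finset Pointwise

theorem mul_sub_abs_le_natCeil_mul {a : ℝ} (ha : 0 ≤ a) (b : ℝ) : a * b - |b| ≤ ⌈a⌉₊ * b := by
  have h₁ : a ≤ ⌈a⌉₊ := Nat.le_ceil a
  have h₂ : (⌈a⌉₊ : ℝ) < a + 1 := Nat.ceil_lt_add_one ha
  rcases le_or_gt 0 b with hb | hb
  · nlinarith [abs_nonneg b]
  · rw [abs_of_neg hb]
    nlinarith

theorem exists_nat_dotProduct_lt {ι : Type*} [Fintype ι] {w y : ι → ℝ} {t : Finset (ι → ℝ)}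
    (hw : 0 ≤ w) (h : ∀ e ∈ t, w ⬝ᵥ e < w ⬝ᵥ y) :
    ∃ k : ι → ℕ, ∀ e ∈ t, (fun i => (k i : ℝ)) ⬝ᵥ e < (fun i => (k i : ℝ)) ⬝ᵥ y := by
  have hround : ∀ (n : ℕ) e, n * (w ⬝ᵥ (y - e)) - ∑ i, |y i - e i|
      ≤ (fun i => (⌈n * w i⌉₊ : ℝ)) ⬝ᵥ (y - e) := fun n e => by
    simp only [dotProduct, mul_sum, ← sum_sub_distrib, Pi.sub_apply, ← mul_assoc]
    exact sum_le_sum fun i _ =>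
      mul_sub_abs_le_natCeil_mul (mul_nonneg n.cast_nonneg (hw i)) _
  have hlarge : ∀ᶠ n : ℕ in atTop, ∀ e ∈ t, ∑ i, |y i - e i| < n * (w ⬝ᵥ (y - e)) :=
    (eventually_all_finset t).2 fun e he =>
      (tendsto_natCast_atTop_atTop.atTop_mul_const
        (by rw [dotProduct_sub]; linarith [h e he])).eventually_gt_atTop _
  obtain ⟨n, hn⟩ := hlarge.exists
  refine ⟨fun i => ⌈n * w i⌉₊, fun e he => ?_⟩
  have := (hround n e).trans_lt' (sub_pos.2 (hn e he))
  rwa [dotProduct_sub, sub_pos] at this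

theorem exists_nonneg_dotProduct_lt_of_notMem_convexHull_add_Iic {ι : Type*} [Fintype ι]
    {y : ι → ℝ} {t : Finset (ι → ℝ)}
    (hy : y ∉ convexHull ℝ (t : Set (ι → ℝ)) + Set.Iic (0 : ι → ℝ)) :
    ∃ w : ι → ℝ, 0 ≤ w ∧ ∀ e ∈ t, w ⬝ᵥ e < w ⬝ᵥ y := by
  classical
  rcases t.eq_empty_or_nonempty with rfl | ⟨e₀, he₀⟩
  · exact ⟨0, le_rfl, by simp⟩
  have hmem : ∀ e ∈ t, ∀ z ≤ 0, e + z ∈ convexHull ℝ (t : Set (ι → ℝ)) + Set.Iic (0 : ι → ℝ) :=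
    fun e he z hz => Set.add_mem_add (subset_convexHull ℝ _ he) hz
  obtain ⟨f, u, hfs, hfy⟩ := geometric_hahn_banach_closed_point
    ((convex_convexHull ℝ _).add (convex_Iic 0))
    (isClosed_Iic.add_left_of_isCompact (t.finite_toSet.isCompact_convexHull ℝ)) hy
  set w : ι → ℝ := fun i => f (Pi.single i 1)
  have hf : ∀ x, f x = w ⬝ᵥ x := fun x => by
    have := f.toLinearMap.pi_apply_eq_sum_univ x
    rw [ContinuousLinearMap.coe_coe] at this
    rw [this, dotProduct_comm]
    refine sum_congr rfl fun i _ => ?_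
    rw [smul_eq_mul]
    congr 2
    ext j
    simp [Pi.single_apply, eq_comm]
  refine ⟨w, fun i => ?_, fun e he => ?_⟩
  · -- `f < u` on all of `e₀ - T • eᵢ`, `T ≥ 0`, which forces `f eᵢ ≥ 0`
    by_contra! hwi
    have hT : 0 ≤ (u - f e₀) / -w i :=
      div_nonneg (sub_nonneg.2 (hfs _ (by simpa using hmem e₀ he₀ 0 le_rfl)).le)
        (neg_nonneg.2 hwi.le)
    have := hfs _ (hmem e₀ he₀ _ (Pi.single_nonpos (i := i).2 (neg_nonpos.2 hT)))
    rw [hf, dotProduct_add, dotProduct_single, ← hf] at this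
    rw [mul_neg, ← neg_mul, mul_div_cancel₀ _ (neg_ne_zero.2 hwi.ne)] at this
    linarith
  · calc w ⬝ᵥ e = f (e + 0) := by rw [add_zero, hf]
      _ < u := hfs _ (hmem e he 0 le_rfl)
      _ < w ⬝ᵥ y := hf y ▸ hfy

theorem eq_of_le_sum_smul_of_sum_exp_le {ι : Type*} {y : ι → ℝ} {t : Finset (ι → ℝ)}
    {w : (ι → ℝ) → ℝ} {𝓕 : Set (Finset ι)} (hcov : ∀ i, ∃ F ∈ 𝓕, i ∈ F)
    (hsum : ∀ e ∈ t, ∀ F ∈ 𝓕, ∑ i ∈ F, Real.exp (e i) ≤ ∑ i ∈ F, Real.exp (y i))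
    (hw₀ : ∀ e ∈ t, 0 < w e) (hw₁ : ∑ e ∈ t, w e = 1) (hy : y ≤ ∑ e ∈ t, w e • e) :
    ∀ e ∈ t, e = y := by
  have happly : ∀ i, (∑ e ∈ t, w e • e) i = ∑ e ∈ t, w e • e i := fun i => by simp
  have hjensen : ∀ i, Real.exp ((∑ e ∈ t, w e • e) i) ≤ ∑ e ∈ t, w e • Real.exp (e i) :=
    fun i => happly i ▸ convexOn_exp.map_sum_le (fun e he => (hw₀ e he).le) hw₁ (by simp)
  have hle : ∀ i, Real.exp (y i) ≤ ∑ e ∈ t, w e • Real.exp (e i) :=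
    fun i => (Real.exp_le_exp.2 (hy i)).trans (hjensen i)
  -- summing `hle` over a member of `𝓕` gives the reverse inequality, so `hle` is tight
  have htight : ∀ i, Real.exp (y i) = ∑ e ∈ t, w e • Real.exp (e i) := fun i => by
    obtain ⟨F, hF, hiF⟩ := hcov i
    refine (sum_eq_sum_iff_of_le fun j _ => hle j).1 (le_antisymm (sum_le_sum fun j _ => hle j) ?_)
      i hiF
    calc ∑ j ∈ F, ∑ e ∈ t, w e • Real.exp (e j)
        = ∑ e ∈ t, w e * ∑ j ∈ F, Real.exp (e j) := by
          rw [sum_comm]; simp only [smul_eq_mul, mul_sum]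
      _ ≤ ∑ e ∈ t, w e * ∑ j ∈ F, Real.exp (y j) :=
          sum_le_sum fun e he => mul_le_mul_of_nonneg_left (hsum e he F hF) (hw₀ e he).le
      _ = ∑ j ∈ F, Real.exp (y j) := by rw [← sum_mul, hw₁, one_mul]
  intro e he
  funext i
  have hyi : y i = (∑ e ∈ t, w e • e) i :=
    le_antisymm (hy i) (Real.exp_le_exp.1 ((hjensen i).trans (htight i).ge))
  have hjensen_eq := (strictConvexOn_exp.map_sum_eq_iff hw₀ hw₁ (p := fun e => e i) (by simp)).1
    (le_antisymm (happly i ▸ hjensen i) (happly i ▸ (htight i).ge.trans (Real.exp_le_exp.2 (hy i))))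
  rw [hjensen_eq e he, hyi, happly]

theorem notMem_convexHull_add_Iic_of_sum_exp_le {ι : Type*} {y : ι → ℝ} {t : Finset (ι → ℝ)}
    {𝓕 : Set (Finset ι)} (hcov : ∀ i, ∃ F ∈ 𝓕, i ∈ F)
    (hsum : ∀ e ∈ t, ∀ F ∈ 𝓕, ∑ i ∈ F, Real.exp (e i) ≤ ∑ i ∈ F, Real.exp (y i))
    (hyt : y ∉ t) : y ∉ convexHull ℝ (t : Set (ι → ℝ)) + Set.Iic (0 : ι → ℝ) := by
  classical
  rintro ⟨x, hx, z, hz, rfl⟩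
  obtain ⟨w, hw₀, hw₁, rfl⟩ := mem_convexHull'.1 hx
  set t' := t.filter (0 < w ·)
  have hsupp : ∑ e ∈ t', w e • e = ∑ e ∈ t, w e • e :=
    sum_filter_of_ne fun e he hwe => (hw₀ e he).lt_of_ne' fun h => hwe (by simp [h])
  have hw₁' : ∑ e ∈ t', w e = 1 := by
    rw [← hw₁]; exact sum_filter_of_ne fun e he hwe => (hw₀ e he).lt_of_ne' hwe
  obtain ⟨e, he⟩ : t'.Nonempty := nonempty_of_sum_ne_zero (hw₁'.symm ▸ one_ne_zero)
  have := eq_of_le_sum_smul_of_sum_exp_le hcov (fun e he => hsum e (filter_subset _ _ he))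
    (fun e he => (mem_filter.1 he).2) hw₁'
    (hsupp ▸ add_le_of_nonpos_right (Set.mem_Iic.1 hz)) e he
  exact hyt (this ▸ (filter_subset _ _ he))

theorem exists_exponents_prod_lt {ι : Type*} [Fintype ι] {c : ι → ℕ} {D : Finset (ι → ℕ)}
    {𝓕 : Set (Finset ι)} (hcov : ∀ i, ∃ F ∈ 𝓕, i ∈ F) (hc : ∀ i, 0 < c i)
    (hD : ∀ d ∈ D, ∀ i, 0 < d i) (hsum : ∀ d ∈ D, ∀ F ∈ 𝓕, ∑ i ∈ F, d i ≤ ∑ i ∈ F, c i)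
    (hcD : c ∉ D) : ∃ k : ι → ℕ, ∀ d ∈ D, ∏ i, d i ^ k i < ∏ i, c i ^ k i := by
  classical
  set lg : (ι → ℕ) → ι → ℝ := fun d i => Real.log (d i)
  have hexp : ∀ d : ι → ℕ, (∀ i, 0 < d i) → ∀ i, Real.exp (lg d i) = d i :=
    fun d hd i => Real.exp_log (Nat.cast_pos.2 (hd i))
  have hlog : ∀ (d : ι → ℕ) (k : ι → ℕ), (∀ i, 0 < d i) →
      Real.log (∏ i, d i ^ k i : ℕ) = (fun i => (k i : ℝ)) ⬝ᵥ lg d := fun d k hd => by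
    push_cast
    rw [Real.log_prod fun i _ => pow_ne_zero _ (Nat.cast_pos.2 (hd i)).ne']
    simp [lg, dotProduct, Real.log_pow]
  have hsep : lg c ∉ convexHull ℝ (D.image lg : Set (ι → ℝ)) + Set.Iic 0 := by
    refine notMem_convexHull_add_Iic_of_sum_exp_le hcov ?_ ?_
    · simp only [mem_image, forall_exists_index, and_imp]
      rintro _ d hd rfl F hF
      simp only [hexp d (hD d hd), hexp c hc]
      exact_mod_cast hsum d hd F hF
    · intro hcD'
      obtain ⟨d, hd, hdc⟩ := mem_image.1 hcD'
      refine hcD ((funext fun i => ?_ : d = c) ▸ hd)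
      have : (d i : ℝ) = c i := by rw [← hexp d (hD d hd), hdc, hexp c hc]
      exact_mod_cast this
  obtain ⟨w, hw, hwt⟩ := exists_nonneg_dotProduct_lt_of_notMem_convexHull_add_Iic hsep
  obtain ⟨k, hk⟩ := exists_nat_dotProduct_lt hw hwt
  refine ⟨k, fun d hd => ?_⟩
  have := hk _ (mem_image_of_mem lg hd)
  rw [← hlog d k (hD d hd), ← hlog c k hc] at this
  have hpos : ∀ d : ι → ℕ, (∀ i, 0 < d i) → (0 : ℝ) < (∏ i, d i ^ k i : ℕ) :=
    fun d hd => Nat.cast_pos.2 (prod_pos fun i _ => pow_pos (hd i) _)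
  exact_mod_cast (Real.log_lt_log_iff (hpos d (hD d hd)) (hpos c hc)).1 this

theorem tendsto_sum_div_pow_card_filter_eq {α : Type*} (s : Finset α) {u : α → ℕ} {P : ℕ}
    (hP : 0 < P) (hu : ∀ x ∈ s, u x ≤ P) :
    Tendsto (fun m : ℕ => ∑ x ∈ s, ((u x : ℝ) / P) ^ m) atTop (𝓝 #{x ∈ s | u x = P}) := by
  classical
  rw [natCast_card_filter]
  refine tendsto_finsetSum s fun x hx => ?_
  split_ifs with hux
  · refine tendsto_const_nhds.congr fun m => ?_
    rw [hux, div_self (by positivity), one_pow]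
  · refine tendsto_pow_atTop_nhds_zero_of_lt_one (by positivity) ?_
    rw [div_lt_one (by exact_mod_cast hP)]
    exact_mod_cast lt_of_le_of_ne (hu x hx) hux

theorem card_filter_eq_le_of_sum_pow_le {α β : Type*} {s : Finset α} {t : Finset β}
    {u : α → ℕ} {v : β → ℕ} {P : ℕ} (hu : ∀ x ∈ s, u x ≤ P) (hv : ∀ y ∈ t, v y ≤ P)
    (h : ∀ m, ∑ x ∈ s, u x ^ m ≤ ∑ y ∈ t, v y ^ m) :
    #{x ∈ s | u x = P} ≤ #{y ∈ t | v y = P} := by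
  rcases Nat.eq_zero_or_pos P with rfl | hP
  · rw [filter_true_of_mem fun x hx => Nat.le_zero.1 (hu x hx),
      filter_true_of_mem fun y hy => Nat.le_zero.1 (hv y hy)]
    simpa using h 0
  refine Nat.cast_le.1 (le_of_tendsto_of_tendsto' (tendsto_sum_div_pow_card_filter_eq s hP hu)
    (tendsto_sum_div_pow_card_filter_eq t hP hv) fun m => ?_)
  simp only [div_pow, ← sum_div]
  gcongr
  exact_mod_cast h m

namespace Dgraph

open Relation Finset

def ProperAdj (G : Dgraph) (v w : ℕ) : Prop := (v, w) ∈ G.A ∧ v ≠ w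

theorem exists_walk_of_transGen {G : Dgraph} {a b : ℕ} (h : TransGen G.ProperAdj a b) :
    ∃ l : List ℕ, (∀ v ∈ l, v ∈ G.V) ∧ l.IsChain G.ProperAdj ∧ 2 ≤ l.length ∧
      l.head? = some a ∧ l.getLast? = some b := by
  induction h using TransGen.head_induction_on with
  | single hab =>
    refine ⟨[_, b], ?_, List.isChain_pair.2 hab, le_rfl, rfl, rfl⟩
    simpa using G.A_sub _ hab.1
  | head hac _ ih =>
    obtain ⟨l, hV, hch, hlen, hhd, hlast⟩ := ih
    refine ⟨_ :: l, ?_, hch.cons (by simpa [hhd] using hac), by rw [List.length_cons]; omega,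
      rfl, ?_⟩
    · simpa using ⟨(G.A_sub _ hac.1).1, hV⟩
    · rw [List.getLast?_cons, hlast]; rfl

theorem MemTa.not_transGen_self {G : Dgraph} (hG : G.MemTa) (v : ℕ) :
    ¬ TransGen G.ProperAdj v v := fun h =>
  let ⟨l, hV, hch, hlen, hhd, hlast⟩ := exists_walk_of_transGen h
  hG ⟨l, hV, hch, hlen, hhd.trans hlast.symm⟩

theorem MemTa.exists_rank {G : Dgraph} (hG : G.MemTa) :
    ∃ r : ℕ → ℕ, ∀ p ∈ G.Astar, r p.1 < r p.2 := by
  classical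
  refine ⟨fun v => #{u ∈ G.V | TransGen G.ProperAdj u v}, fun p hp => ?_⟩
  obtain ⟨hpA, hne⟩ := Finset.mem_filter.1 hp
  have hadj : G.ProperAdj p.1 p.2 := ⟨hpA, hne⟩
  refine Finset.card_lt_card ⟨fun u hu => ?_, fun hsub => ?_⟩
  · obtain ⟨huV, hu⟩ := Finset.mem_filter.1 hu
    exact Finset.mem_filter.2 ⟨huV, hu.tail hadj⟩
  · exact hG.not_transGen_self p.1
      (Finset.mem_filter.1 (hsub (Finset.mem_filter.2 ⟨(G.A_sub p hpA).1, .single hadj⟩))).2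

theorem memTa_of_rank {G : Dgraph} (r : ℕ → ℕ) (hr : ∀ p ∈ G.Astar, r p.1 < r p.2) :
    G.MemTa := by
  rintro ⟨_ | ⟨a, l⟩, -, hch, hlen, hhl⟩
  · simp at hlen
  have hl : l ≠ [] := by rintro rfl; simp at hlen
  have hpw : (a :: l).Pairwise (fun v w => r v < r w) :=
    List.isChain_iff_pairwise.1 (hch.imp fun {_ _} h => hr _ (Finset.mem_filter.2 h))
  rw [List.head?_cons, List.getLast?_eq_getLast_of_ne_nil (List.cons_ne_nil a l),
    Option.some_inj, List.getLast_cons hl] at hhl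
  exact lt_irrefl _ (hhl ▸ (List.pairwise_cons.1 hpw).1 _ (List.getLast_mem hl))

theorem finite_hom (G H : Dgraph) : (Hom G H).Finite := by
  refine Set.Finite.of_injOn (f := fun (f : ℕ → ℕ) (v : ↥G.V) => f v)
    (t := Set.univ.pi fun _ => (H.V : Set ℕ))
    (fun f hf v _ => hf.1 v v.2) (fun f hf g hg hfg => funext fun v => ?_)
    (Set.Finite.pi fun _ => H.V.finite_toSet)
  by_cases hv : v ∈ G.V
  · exact congr_fun hfg ⟨v, hv⟩
  · rw [hf.2.2 v hv, hg.2.2 v hv]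

noncomputable def homFinset (G H : Dgraph) : Finset (ℕ → ℕ) := (finite_hom G H).toFinset

theorem mem_homFinset {G H : Dgraph} {f : ℕ → ℕ} : f ∈ homFinset G H ↔ f ∈ Hom G H :=
  Set.Finite.mem_toFinset _

theorem ncard_hom (G H : Dgraph) : (Hom G H).ncard = #(homFinset G H) :=
  Set.ncard_eq_toFinset_card _ _

theorem restrict_of_mem {X : Finset ℕ} {x : ℕ} (hx : x ∈ X) (f : ℕ → ℕ) :
    restrict X f x = f x := if_pos hx

theorem restrict_mem_hom {L G H : Dgraph} (hLG : L.Subgraph G) {f : ℕ → ℕ} (hf : f ∈ Hom G H) :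
    restrict L.V f ∈ Hom L H := by
  refine ⟨fun v hv => ?_, fun p hp => ?_, fun v hv => if_neg hv⟩
  · rw [restrict_of_mem hv]; exact hf.1 v (hLG.1 hv)
  · rw [restrict_of_mem (L.A_sub p hp).1, restrict_of_mem (L.A_sub p hp).2]
    exact hf.2.1 p (hLG.2 hp)

theorem mu_restrict (L H : Dgraph) (f : ℕ → ℕ) :
    mu L H (restrict L.V f) = ∑ p ∈ L.Astar, H.iota (f p.1) (f p.2) := by
  refine sum_congr rfl fun p hp => ?_
  have hpA := (mem_filter.1 hp).1
  rw [restrict_of_mem (L.A_sub p hpA).1, restrict_of_mem (L.A_sub p hpA).2]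

theorem iota_pos {G H : Dgraph} (hH : H.IsRefl) {f : ℕ → ℕ} (hf : f ∈ Hom G H)
    {p : ℕ × ℕ} (hp : p ∈ G.A) : 0 < H.iota (f p.1) (f p.2) := by
  have hv := hf.1 _ (G.A_sub p hp).1
  exact card_pos.2 ⟨f p.1, mem_filter.2 ⟨hv, hH _ hv, hf.2.1 p hp⟩⟩

theorem sum_iota_le_of_mem_MLSet {G H L : Dgraph} {𝓛 : Set Dgraph} (hL : L ∈ 𝓛)
    (hLG : L.Subgraph G) {θ ζ : ℕ → ℕ} (hθ : θ ∈ MLSet G H 𝓛) (hζ : ζ ∈ Hom G H) :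
    ∑ p ∈ L.Astar, H.iota (ζ p.1) (ζ p.2) ≤ ∑ p ∈ L.Astar, H.iota (θ p.1) (θ p.2) := by
  rw [← mu_restrict, ← mu_restrict]
  exact (hθ.2 L hL).2 _ (restrict_mem_hom hLG hζ)

section TwoPaths

variable (G : Dgraph) (B : Finset (ℕ × ℕ)) (k : B → ℕ)

/-- Midpoints are numbered above every vertex of `G`, and encode the arc they are attached to. -/
def midpoint (p : ℕ × ℕ) (j : ℕ) : ℕ := G.V.sup id + 1 + Nat.pair (Nat.pair p.1 p.2) j

def midSrc (z : ℕ) : ℕ := (Nat.unpair (Nat.unpair (z - (G.V.sup id + 1))).1).1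

def midTgt (z : ℕ) : ℕ := (Nat.unpair (Nat.unpair (z - (G.V.sup id + 1))).1).2

def midpoints : Finset ℕ := univ.biUnion fun a : B => (range (k a)).image (midpoint G a.1)

variable {G B k}

theorem midpoint_notMem_V (p : ℕ × ℕ) (j : ℕ) : midpoint G p j ∉ G.V := fun h => by
  have : midpoint G p j ≤ G.V.sup id := le_sup (f := id) h
  simp only [midpoint] at this
  omega

@[simp] theorem midSrc_midpoint (p : ℕ × ℕ) (j : ℕ) : midSrc G (midpoint G p j) = p.1 := by
  simp [midSrc, midpoint]

@[simp] theorem midTgt_midpoint (p : ℕ × ℕ) (j : ℕ) : midTgt G (midpoint G p j) = p.2 := by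
  simp [midTgt, midpoint]

theorem midpoint_inj {p q : ℕ × ℕ} {i j : ℕ} (h : midpoint G p i = midpoint G q j) :
    p = q ∧ i = j := by
  simp only [midpoint, Nat.add_left_cancel_iff, Nat.pair_eq_pair] at h
  exact ⟨Prod.ext h.1.1 h.1.2, h.2⟩

theorem mem_midpoints {z : ℕ} :
    z ∈ midpoints G B k ↔ ∃ a : B, ∃ j < k a, midpoint G a.1 j = z := by
  simp [midpoints]

theorem notMem_V_of_mem_midpoints {z : ℕ} (hz : z ∈ midpoints G B k) : z ∉ G.V := by
  obtain ⟨a, j, -, rfl⟩ := mem_midpoints.1 hz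
  exact midpoint_notMem_V _ _

theorem midSrc_midTgt_mem_Astar (hB : B ⊆ G.Astar) {z : ℕ} (hz : z ∈ midpoints G B k) :
    (midSrc G z, midTgt G z) ∈ G.Astar := by
  obtain ⟨a, j, -, rfl⟩ := mem_midpoints.1 hz
  simpa using hB a.2

theorem midSrc_midTgt_mem_V (hB : B ⊆ G.Astar) {z : ℕ} (hz : z ∈ midpoints G B k) :
    midSrc G z ∈ G.V ∧ midTgt G z ∈ G.V :=
  G.A_sub _ (mem_filter.1 (midSrc_midTgt_mem_Astar hB hz)).1

variable (G B k) in
def addTwoPaths (hB : B ⊆ G.Astar) : Dgraph where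
  V := G.V ∪ midpoints G B k
  nonempty := G.nonempty.mono subset_union_left
  A := G.A ∪ (midpoints G B k).image (fun z => (midSrc G z, z)) ∪
    (midpoints G B k).image (fun z => (z, midTgt G z))
  A_sub := by
    simp only [mem_union, mem_image]
    rintro q ((hq | ⟨z, hz, rfl⟩) | ⟨z, hz, rfl⟩)
    · exact ⟨.inl (G.A_sub q hq).1, .inl (G.A_sub q hq).2⟩
    · exact ⟨.inl (midSrc_midTgt_mem_V hB hz).1, .inr hz⟩
    · exact ⟨.inr hz, .inl (midSrc_midTgt_mem_V hB hz).2⟩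

variable (hB : B ⊆ G.Astar)

theorem subgraph_addTwoPaths : G.Subgraph (addTwoPaths G B k hB) :=
  ⟨subset_union_left, subset_union_left.trans subset_union_left⟩

theorem memTa_addTwoPaths (hG : G.MemTa) : (addTwoPaths G B k hB).MemTa := by
  obtain ⟨r, hr⟩ := hG.exists_rank
  refine memTa_of_rank (fun x => if x ∈ G.V then 2 * r x else 2 * r (midSrc G x) + 1) ?_
  simp only [Astar, addTwoPaths, mem_filter, mem_union, mem_image]
  rintro q ⟨((hq | ⟨z, hz, rfl⟩) | ⟨z, hz, rfl⟩), hne⟩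
  · have := hr q (mem_filter.2 ⟨hq, hne⟩)
    simp only [if_pos (G.A_sub q hq).1, if_pos (G.A_sub q hq).2]
    omega
  · simp only [if_pos (midSrc_midTgt_mem_V hB hz).1, if_neg (notMem_V_of_mem_midpoints hz)]
    omega
  · have : r (midSrc G z) < r (midTgt G z) := hr _ (midSrc_midTgt_mem_Astar hB hz)
    simp only [if_pos (midSrc_midTgt_mem_V hB hz).2, if_neg (notMem_V_of_mem_midpoints hz)]
    omega

theorem mem_interval_of_mem_hom_addTwoPaths {H : Dgraph} {f : ℕ → ℕ}
    (hf : f ∈ Hom (addTwoPaths G B k hB) H) {z : ℕ} (hz : z ∈ midpoints G B k) :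
    f z ∈ H.interval (f (midSrc G z)) (f (midTgt G z)) :=
  mem_filter.2 ⟨hf.1 z (mem_union_right _ hz),
    hf.2.1 _ (mem_union_left _ (mem_union_right _ (mem_image_of_mem _ hz))),
    hf.2.1 _ (mem_union_right _ (mem_image_of_mem _ hz))⟩

variable (G B k) in
def glue (ζ : ℕ → ℕ) (g : ∀ z ∈ midpoints G B k, ℕ) (x : ℕ) : ℕ :=
  if x ∈ G.V then ζ x else if h : x ∈ midpoints G B k then g x h else 0

theorem glue_of_mem_midpoints (ζ : ℕ → ℕ) (g : ∀ z ∈ midpoints G B k, ℕ) {z : ℕ}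
    (hz : z ∈ midpoints G B k) : glue G B k ζ g z = g z hz := by
  rw [glue, if_neg (notMem_V_of_mem_midpoints hz), dif_pos hz]

theorem restrict_glue {H : Dgraph} {ζ : ℕ → ℕ} (hζ : ζ ∈ Hom G H)
    (g : ∀ z ∈ midpoints G B k, ℕ) : restrict G.V (glue G B k ζ g) = ζ := by
  funext x
  by_cases hx : x ∈ G.V
  · rw [restrict_of_mem hx, glue, if_pos hx]
  · rw [restrict, if_neg hx, hζ.2.2 x hx]

theorem glue_mem_hom {H : Dgraph} {ζ : ℕ → ℕ} (hζ : ζ ∈ Hom G H)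
    {g : ∀ z ∈ midpoints G B k, ℕ}
    (hg : ∀ z hz, g z hz ∈ H.interval (ζ (midSrc G z)) (ζ (midTgt G z))) :
    glue G B k ζ g ∈ Hom (addTwoPaths G B k hB) H := by
  have hV : ∀ v ∈ G.V, glue G B k ζ g v = ζ v := fun v hv => if_pos hv
  refine ⟨fun v hv => ?_, fun q hq => ?_, fun v hv => ?_⟩
  · rcases mem_union.1 hv with hv | hv
    · rw [hV v hv]; exact hζ.1 v hv
    · rw [glue_of_mem_midpoints _ _ hv]; exact (mem_filter.1 (hg v hv)).1
  · simp only [addTwoPaths, mem_union, mem_image] at hq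
    rcases hq with (hq | ⟨z, hz, rfl⟩) | ⟨z, hz, rfl⟩
    · rw [hV _ (G.A_sub q hq).1, hV _ (G.A_sub q hq).2]; exact hζ.2.1 q hq
    · rw [hV _ (midSrc_midTgt_mem_V hB hz).1, glue_of_mem_midpoints _ _ hz]
      exact (mem_filter.1 (hg z hz)).2.1
    · rw [hV _ (midSrc_midTgt_mem_V hB hz).2, glue_of_mem_midpoints _ _ hz]
      exact (mem_filter.1 (hg z hz)).2.2
  · rw [glue, if_neg fun h => hv (mem_union_left _ h), dif_neg fun h => hv (mem_union_right _ h)]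

theorem glue_restrict {H : Dgraph} {f : ℕ → ℕ} (hf : f ∈ Hom (addTwoPaths G B k hB) H) :
    glue G B k (restrict G.V f) (fun z _ => f z) = f := by
  funext x
  by_cases hx : x ∈ G.V
  · rw [glue, if_pos hx, restrict_of_mem hx]
  by_cases hxm : x ∈ midpoints G B k
  · rw [glue_of_mem_midpoints _ _ hxm]
  · rw [glue, if_neg hx, dif_neg hxm, hf.2.2 x (by simp [addTwoPaths, hx, hxm])]

/-- A homomorphism from `addTwoPaths` extending `ζ` is a free choice of a point of the interval
`[ζ v, ζ w]_H` for every midpoint of an arc `vw`. -/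
theorem card_filter_restrict_addTwoPaths_eq [DecidableEq (ℕ → ℕ)] (H : Dgraph) {ζ : ℕ → ℕ}
    (hζ : ζ ∈ Hom G H) :
    #{f ∈ homFinset (addTwoPaths G B k hB) H | restrict G.V f = ζ}
      = ∏ z ∈ midpoints G B k, H.iota (ζ (midSrc G z)) (ζ (midTgt G z)) := by
  simp only [iota]
  rw [← card_pi]
  refine card_bij' (fun f _ z _ => f z) (fun g _ => glue G B k ζ g) ?_ ?_ ?_ ?_
  · intro f hf
    obtain ⟨hfH, rfl⟩ := mem_filter.1 hf
    refine mem_pi.2 fun z hz => ?_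
    have := mem_interval_of_mem_hom_addTwoPaths hB (mem_homFinset.1 hfH) hz
    rwa [restrict_of_mem (midSrc_midTgt_mem_V hB hz).1,
      restrict_of_mem (midSrc_midTgt_mem_V hB hz).2]
  · intro g hg
    exact mem_filter.2 ⟨mem_homFinset.2 (glue_mem_hom hB hζ (mem_pi.1 hg)), restrict_glue hζ g⟩
  · intro f hf
    obtain ⟨hfH, rfl⟩ := mem_filter.1 hf
    exact glue_restrict hB (mem_homFinset.1 hfH)
  · intro g _
    funext z hz
    exact glue_of_mem_midpoints _ _ hz

theorem prod_midpoints (φ : ℕ × ℕ → ℕ) :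
    ∏ z ∈ midpoints G B k, φ (midSrc G z, midTgt G z) = ∏ a : B, φ a ^ k a := by
  rw [midpoints, prod_biUnion]
  · refine prod_congr rfl fun a _ => ?_
    rw [prod_image fun i _ j _ hij => (midpoint_inj hij).2]
    simp
  · intro a _ b _ hab
    simp only [Function.onFun, disjoint_left, mem_image]
    rintro _ ⟨i, -, rfl⟩ ⟨j, -, hji⟩
    exact hab (Subtype.ext (midpoint_inj hji).1.symm)

theorem card_homFinset_addTwoPaths (H : Dgraph) :
    #(homFinset (addTwoPaths G B k hB) H)
      = ∑ ζ ∈ homFinset G H, ∏ a : B, H.iota (ζ a.1.1) (ζ a.1.2) ^ k a := by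
  classical
  rw [card_eq_sum_card_fiberwise fun f hf => mem_homFinset.2
    (restrict_mem_hom (subgraph_addTwoPaths hB) (mem_homFinset.1 hf))]
  refine sum_congr rfl fun ζ hζ => ?_
  rw [card_filter_restrict_addTwoPaths_eq hB H (mem_homFinset.1 hζ)]
  exact prod_midpoints (fun a => H.iota (ζ a.1) (ζ a.2))

end TwoPaths

variable (H : Dgraph) (B : Finset (ℕ × ℕ)) in
def arcProfile (ζ : ℕ → ℕ) (a : B) : ℕ := H.iota (ζ a.1.1) (ζ a.1.2)

theorem card_arcProfile_eq_le {G R S : Dgraph} (hG : G.MemTa)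
    (hHom : ∀ G' : Dgraph, G'.MemTa → (Hom G' R).ncard ≤ (Hom G' S).ncard)
    {B : Finset (ℕ × ℕ)} (hB : B ⊆ G.Astar) {c k : B → ℕ}
    (hR : ∀ ζ ∈ Hom G R, arcProfile R B ζ ≠ c → ∏ a, arcProfile R B ζ a ^ k a < ∏ a, c a ^ k a)
    (hS : ∀ ζ ∈ Hom G S, arcProfile S B ζ ≠ c → ∏ a, arcProfile S B ζ a ^ k a < ∏ a, c a ^ k a)
    [DecidableEq (B → ℕ)] :
    #{ζ ∈ homFinset G R | arcProfile R B ζ = c} ≤ #{ζ ∈ homFinset G S | arcProfile S B ζ = c} := by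
  have hmax : ∀ {H : Dgraph}, (∀ ζ ∈ Hom G H, arcProfile H B ζ ≠ c →
      ∏ a, arcProfile H B ζ a ^ k a < ∏ a, c a ^ k a) → ∀ ζ ∈ homFinset G H,
      ∏ a, arcProfile H B ζ a ^ k a ≤ ∏ a, c a ^ k a ∧
      (∏ a, arcProfile H B ζ a ^ k a = ∏ a, c a ^ k a ↔ arcProfile H B ζ = c) := by
    intro H hH ζ hζ
    by_cases hζc : arcProfile H B ζ = c
    · simp [hζc]
    · have := hH ζ (mem_homFinset.1 hζ) hζc
      exact ⟨this.le, iff_of_false this.ne hζc⟩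
  rw [← filter_congr fun ζ hζ => (hmax hR ζ hζ).2, ← filter_congr fun ζ hζ => (hmax hS ζ hζ).2]
  refine card_filter_eq_le_of_sum_pow_le (fun ζ hζ => (hmax hR ζ hζ).1)
    (fun ζ hζ => (hmax hS ζ hζ).1) fun m => ?_
  have := hHom _ (memTa_addTwoPaths hB (k := m • k) hG)
  simp only [ncard_hom, card_homFinset_addTwoPaths] at this
  simpa only [arcProfile, ← prod_pow, ← pow_mul, Pi.smul_apply, smul_eq_mul, mul_comm] using this

open Classical in
/-- The set `B = ⋃_{L ∈ 𝓛} A(L*)`, as a finset when the `L` are subgraphs of `G`. -/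
noncomputable def coveredArcs (G : Dgraph) (𝓛 : Set Dgraph) : Finset (ℕ × ℕ) :=
  G.Astar.filter fun p => ∃ L ∈ 𝓛, p ∈ L.Astar

section CoveredArcs

variable {G : Dgraph} {𝓛 : Set Dgraph}

theorem mem_coveredArcs {p : ℕ × ℕ} :
    p ∈ coveredArcs G 𝓛 ↔ p ∈ G.Astar ∧ ∃ L ∈ 𝓛, p ∈ L.Astar := by
  simp [coveredArcs]

theorem coveredArcs_subset : coveredArcs G 𝓛 ⊆ G.Astar := fun _ hp => (mem_coveredArcs.1 hp).1

theorem Astar_subset_coveredArcs (h𝓛 : ∀ L ∈ 𝓛, L.Subgraph G) {L : Dgraph} (hL : L ∈ 𝓛) :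
    L.Astar ⊆ coveredArcs G 𝓛 := fun _ hp =>
  mem_coveredArcs.2 ⟨mem_filter.2 ⟨(h𝓛 L hL).2 (mem_filter.1 hp).1, (mem_filter.1 hp).2⟩, L, hL, hp⟩

theorem sum_subtype_coveredArcs (h𝓛 : ∀ L ∈ 𝓛, L.Subgraph G) {L : Dgraph} (hL : L ∈ 𝓛)
    (f : ℕ × ℕ → ℕ) : ∑ a ∈ L.Astar.subtype (· ∈ coveredArcs G 𝓛), f a = ∑ p ∈ L.Astar, f p := by
  rw [sum_subtype_eq_sum_filter, filter_true_of_mem (Astar_subset_coveredArcs h𝓛 hL)]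

theorem arcProfile_eq_iff (h𝓛 : ∀ L ∈ 𝓛, L.Subgraph G) {H H' : Dgraph} {ζ ξ : ℕ → ℕ} :
    arcProfile H' (coveredArcs G 𝓛) ζ = arcProfile H (coveredArcs G 𝓛) ξ ↔
      ∀ L ∈ 𝓛, ∀ p ∈ L.Astar, H'.iota (ζ p.1) (ζ p.2) = H.iota (ξ p.1) (ξ p.2) := by
  refine ⟨fun h L hL p hp => congr_fun h ⟨p, Astar_subset_coveredArcs h𝓛 hL hp⟩,
    fun h => funext fun a => ?_⟩
  obtain ⟨-, L, hL, hp⟩ := mem_coveredArcs.1 a.2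
  exact h L hL a hp

theorem ncard_JSet (h𝓛 : ∀ L ∈ 𝓛, L.Subgraph G) (H H' : Dgraph) (ξ : ℕ → ℕ) :
    (JSet G H H' 𝓛 ξ).ncard = #{ζ ∈ homFinset G H' |
      arcProfile H' (coveredArcs G 𝓛) ζ = arcProfile H (coveredArcs G 𝓛) ξ} := by
  rw [← Set.ncard_coe_finset]
  congr 1
  ext ζ
  simp [JSet, mem_homFinset, arcProfile_eq_iff h𝓛]

theorem arcProfile_pos {H : Dgraph} (hH : H.IsRefl) {ζ : ℕ → ℕ} (hζ : ζ ∈ Hom G H)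
    (a : coveredArcs G 𝓛) : 0 < arcProfile H (coveredArcs G 𝓛) ζ a :=
  iota_pos hH hζ (mem_filter.1 (coveredArcs_subset a.2)).1

theorem sum_arcProfile_le_of_mem_MLSet (h𝓛 : ∀ L ∈ 𝓛, L.Subgraph G) {H L : Dgraph} (hL : L ∈ 𝓛)
    {θ ζ : ℕ → ℕ} (hθ : θ ∈ MLSet G H 𝓛) (hζ : ζ ∈ Hom G H) :
    ∑ a ∈ L.Astar.subtype (· ∈ coveredArcs G 𝓛), arcProfile H _ ζ a
      ≤ ∑ a ∈ L.Astar.subtype (· ∈ coveredArcs G 𝓛), arcProfile H _ θ a := by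
  simp only [arcProfile]
  rw [sum_subtype_coveredArcs h𝓛 hL (fun p => H.iota (ζ p.1) (ζ p.2)),
    sum_subtype_coveredArcs h𝓛 hL (fun p => H.iota (θ p.1) (θ p.2))]
  exact sum_iota_le_of_mem_MLSet hL (h𝓛 L hL) hθ hζ

theorem exists_exponents_arcProfile {R S : Dgraph} (hR : R.IsRefl) (hS : S.IsRefl)
    (h𝓛 : ∀ L ∈ 𝓛, L.Subgraph G) {θR θS : ℕ → ℕ} (hθR : θR ∈ MLSet G R 𝓛)
    (hθS : θS ∈ MLSet G S 𝓛)
    (hθ : arcProfile S (coveredArcs G 𝓛) θS = arcProfile R (coveredArcs G 𝓛) θR) :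
    ∃ k : coveredArcs G 𝓛 → ℕ,
      (∀ ζ ∈ Hom G R, arcProfile R (coveredArcs G 𝓛) ζ ≠ arcProfile R (coveredArcs G 𝓛) θR →
        ∏ a, arcProfile R (coveredArcs G 𝓛) ζ a ^ k a
          < ∏ a, arcProfile R (coveredArcs G 𝓛) θR a ^ k a) ∧
      (∀ ζ ∈ Hom G S, arcProfile S (coveredArcs G 𝓛) ζ ≠ arcProfile R (coveredArcs G 𝓛) θR →
        ∏ a, arcProfile S (coveredArcs G 𝓛) ζ a ^ k a
          < ∏ a, arcProfile R (coveredArcs G 𝓛) θR a ^ k a) := by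
  classical
  set B := coveredArcs G 𝓛
  set c := arcProfile R B θR
  set D := ((homFinset G R).image (arcProfile R B) ∪ (homFinset G S).image (arcProfile S B)).erase c
  have hmemD : ∀ d ∈ D, (∃ ζ ∈ Hom G R, arcProfile R B ζ = d) ∨
      ∃ ζ ∈ Hom G S, arcProfile S B ζ = d := by
    simp [D, mem_homFinset]
  obtain ⟨k, hk⟩ := exists_exponents_prod_lt (c := c) (D := D)
    (𝓕 := {F | ∃ L ∈ 𝓛, F = L.Astar.subtype (· ∈ B)})
    (fun a => by
      obtain ⟨-, L, hL, hp⟩ := mem_coveredArcs.1 a.2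
      exact ⟨_, ⟨L, hL, rfl⟩, mem_subtype.2 hp⟩)
    (arcProfile_pos hR hθR.1)
    (fun d hd => by
      rcases hmemD d hd with ⟨ζ, hζ, rfl⟩ | ⟨ζ, hζ, rfl⟩
      exacts [arcProfile_pos hR hζ, arcProfile_pos hS hζ])
    (by
      rintro d hd _ ⟨L, hL, rfl⟩
      rcases hmemD d hd with ⟨ζ, hζ, rfl⟩ | ⟨ζ, hζ, rfl⟩
      · exact sum_arcProfile_le_of_mem_MLSet h𝓛 hL hθR hζ
      · exact hθ ▸ sum_arcProfile_le_of_mem_MLSet h𝓛 hL hθS hζ)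
    (notMem_erase c _)
  refine ⟨k, fun ζ hζ hne => hk _ ?_, fun ζ hζ hne => hk _ ?_⟩
  · simpa [D, hne, mem_homFinset] using .inl ⟨ζ, hζ, rfl⟩
  · simpa [D, hne, mem_homFinset] using .inr ⟨ζ, hζ, rfl⟩

end CoveredArcs

end Dgraph

theorem stmt_6_general (R S : Dgraph) (hRr : R.IsRefl) (hSr : S.IsRefl)
    (hHom : ∀ G' : Dgraph, G'.MemTa → (Hom G' R).ncard ≤ (Hom G' S).ncard)
    (G : Dgraph) (hGt : G.MemTa) (𝓛 : Set Dgraph) (h𝓛 : ∀ L ∈ 𝓛, Subgraph L G)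
    (ξ : ℕ → ℕ) (hξ : ξ ∈ MLSet G R 𝓛)
    (hI : ∃ ζ ∈ MLSet G S 𝓛, ∀ L ∈ 𝓛, ∀ p ∈ L.Astar,
      S.iota (ζ p.1) (ζ p.2) = R.iota (ξ p.1) (ξ p.2)) :
    (JSet G R R 𝓛 ξ).ncard ≤ (JSet G R S 𝓛 ξ).ncard := by
  obtain ⟨ζ₀, hζ₀, hζ₀ξ⟩ := hI
  obtain ⟨k, hkR, hkS⟩ :=
    exists_exponents_arcProfile hRr hSr h𝓛 hξ hζ₀ ((arcProfile_eq_iff h𝓛).2 hζ₀ξ)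
  rw [ncard_JSet h𝓛, ncard_JSet h𝓛]
  exact card_arcProfile_eq_le hGt hHom coveredArcs_subset hkR hkS

theorem stmt_6 (R S : Dgraph) (hRt : R.MemTa) (hRr : R.IsRefl) (hSr : S.IsRefl)
    (hHom : ∀ G' : Dgraph, G'.MemTa → (Hom G' R).ncard ≤ (Hom G' S).ncard)
    (G : Dgraph) (hGt : G.MemTa) (𝓛 : Set Dgraph) (h𝓛 : ∀ L ∈ 𝓛, Subgraph L G)
    (ξ : ℕ → ℕ) (hξ : ξ ∈ MLSet G R 𝓛)
    (hI : ∃ ζ ∈ MLSet G S 𝓛, ∀ L ∈ 𝓛, ∀ p ∈ L.Astar,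
      S.iota (ζ p.1) (ζ p.2) = R.iota (ξ p.1) (ξ p.2)) :
    (JSet G R R 𝓛 ξ).ncard ≤ (JSet G R S 𝓛 ξ).ncard :=
  stmt_6_general R S hRr hSr hHom G hGt 𝓛 h𝓛 ξ hξ hI
end

section
/- Let G ∈ 𝔗_a be a digraph without isolated vertices and with h_G ≥ 1. Suppose that for every reflexive H ∈ 𝔗_a with h_H ∈ {h_G, h_G+1} and every ξ ∈ 𝓗(G,H) the following equivalence holds: ξ ∈ 𝓢(G,H) if and only if ξ(P_{i-1})ξ(P_i) ∈ A(H*) for every path P = P_0,…,P_{h_G} of length h_G in G and every 1 ≤ i ≤ h_G. Then every vertex of G lies on a path of length h_G in G, i.e., G ∈ 𝔗_a^{=h_G}. -/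
/-!
Let `depth u` be the length of a longest path ending at `u`; in `G ∈ 𝔗ₐ` it increases strictly
along proper arcs. Suppose `v` lies on no longest path. Since `v` is not isolated, it lies on a
proper arc `xy` whose neighbourhood splits at a level `m`: `depth x ≤ m < depth y`, and every
other in-neighbour of `x` or `y` has depth `≤ m`, every other out-neighbour depth `> m` (take
for `y` an out-neighbour of `v` of least depth, or for `x` an in-neighbour of `v` of greatest
depth). Sending `x` and `y` to `m + 1` and any other `u` to `depth u` or `depth u + 1`, according
as `depth u ≤ m` or not, is a homomorphism into the reflexive chain of height `h_G + 1` that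
separates the ends of every proper arc except `xy`. No longest path contains both `x` and `y`,
so the hypothesis makes this map strict, although it collapses `xy`.
-/

namespace Dgraph

variable {G : Dgraph}

theorem IsPath.length_le_card {p : List ℕ} (hp : G.IsPath p) : p.length ≤ G.V.card := by
  rw [← List.toFinset_card_of_nodup hp.2.1]
  exact Finset.card_le_card fun v hv => hp.2.2.1 v (List.mem_toFinset.1 hv)

theorem IsPath.isChain_proper {p : List ℕ} (hp : G.IsPath p) :
    p.IsChain (fun v w => (v, w) ∈ G.A ∧ v ≠ w) :=
  List.isChain_iff_getElem.2 fun i hi =>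
    ⟨List.isChain_iff_getElem.1 hp.2.2.2 i hi, fun h => by simpa using hp.2.1.getElem_inj_iff.1 h⟩

theorem IsPath.concat {p : List ℕ} {u v : ℕ} (hp : G.IsPath p) (hlast : p.getLast? = some u)
    (huv : (u, v) ∈ G.A) (hv : v ∉ p) : G.IsPath (p ++ [v]) := by
  refine ⟨by simp, List.nodup_append.2 ⟨hp.2.1, List.nodup_singleton v, ?_⟩, ?_, ?_⟩
  · rintro a ha b hb rfl
    exact hv (List.mem_singleton.1 hb ▸ ha)
  · intro w hw
    rcases List.mem_append.1 hw with hw | hw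
    · exact hp.2.2.1 w hw
    · exact List.mem_singleton.1 hw ▸ (G.A_sub _ huv).2
  · refine List.IsChain.append hp.2.2.2 (List.isChain_singleton v) ?_
    simp [hlast, huv]

theorem isPath_singleton {v : ℕ} (hv : v ∈ G.V) : G.IsPath [v] :=
  ⟨List.cons_ne_nil _ _, List.nodup_singleton _, by simpa using hv, List.isChain_singleton _⟩

theorem bddAbove_of_isPath {S : Set ℕ} (hS : ∀ n ∈ S, ∃ p, G.IsPath p ∧ p.length = n + 1) :
    BddAbove S :=
  ⟨G.V.card, fun n hn => by
    obtain ⟨p, hp, hn⟩ := hS n hn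
    have := hp.length_le_card
    omega⟩

theorem length_le_height {p : List ℕ} (hp : G.IsPath p) : p.length ≤ G.height + 1 := by
  obtain ⟨n, hn⟩ : ∃ n, p.length = n + 1 := Nat.exists_eq_succ_of_ne_zero (by simpa using hp.1)
  rw [hn, Nat.add_le_add_iff_right]
  exact le_csSup (bddAbove_of_isPath fun _ hn => hn) ⟨p, hp, hn⟩

theorem exists_isPath_length_height (G : Dgraph) : ∃ p, G.IsPath p ∧ p.length = G.height + 1 :=
  Nat.sSup_mem (s := {n | ∃ p, G.IsPath p ∧ p.length = n + 1})
    ⟨0, _, isPath_singleton G.nonempty.choose_spec, rfl⟩ (bddAbove_of_isPath fun _ hn => hn)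

noncomputable def depth (G : Dgraph) (u : ℕ) : ℕ :=
  sSup {n | ∃ p, G.IsPath p ∧ p.getLast? = some u ∧ p.length = n + 1}

theorem bddAbove_depth (u : ℕ) :
    BddAbove {n | ∃ p, G.IsPath p ∧ p.getLast? = some u ∧ p.length = n + 1} :=
  bddAbove_of_isPath fun _ ⟨p, hp, _, hn⟩ => ⟨p, hp, hn⟩

theorem exists_isPath_length_depth {u : ℕ} (hu : u ∈ G.V) :
    ∃ p, G.IsPath p ∧ p.getLast? = some u ∧ p.length = G.depth u + 1 :=
  Nat.sSup_mem (s := {n | ∃ p, G.IsPath p ∧ p.getLast? = some u ∧ p.length = n + 1})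
    ⟨0, [u], isPath_singleton hu, rfl, rfl⟩ (bddAbove_depth u)

theorem depth_le_height {u : ℕ} (hu : u ∈ G.V) : G.depth u ≤ G.height := by
  obtain ⟨p, hp, -, hn⟩ := exists_isPath_length_depth hu
  have := length_le_height hp
  omega

theorem MemTa.notMem_of_isPath {p : List ℕ} {u v : ℕ} (hG : G.MemTa) (hp : G.IsPath p)
    (hlast : p.getLast? = some u) (huv : (u, v) ∈ G.A) (hne : u ≠ v) : v ∉ p := by
  intro hv
  obtain ⟨s, t, rfl⟩ := List.append_of_mem hv
  have hlast' : (v :: t).getLast? = some u := by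
    simpa [List.getLast?_append] using hlast
  refine hG ⟨(v :: t) ++ [v], ?_, ?_, by simp, List.getLast?_concat.symm⟩
  · intro w hw
    exact hp.2.2.1 w (by simp only [List.mem_append, List.mem_cons] at hw ⊢; tauto)
  · refine List.IsChain.append (hp.isChain_proper.suffix (List.suffix_append s _))
      (List.isChain_singleton v) ?_
    simp [hlast', huv, hne]

theorem MemTa.depth_lt_depth {u v : ℕ} (hG : G.MemTa) (huv : (u, v) ∈ G.A) (hne : u ≠ v) :
    G.depth u < G.depth v := by
  obtain ⟨p, hp, hlast, hn⟩ := exists_isPath_length_depth (G.A_sub _ huv).1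
  have hpv := hp.concat hlast huv (hG.notMem_of_isPath hp hlast huv hne)
  have : G.depth u + 1 ≤ G.depth v :=
    le_csSup (bddAbove_depth v) ⟨_, hpv, List.getLast?_concat, by simp [hn]⟩
  omega

theorem memTa_of_lt_of_mem_Astar (f : ℕ → ℕ) (hf : ∀ p ∈ G.Astar, f p.1 < f p.2) : G.MemTa := by
  rintro ⟨p, -, hp, hlen, hcycle⟩
  obtain ⟨a, b, t, rfl⟩ : ∃ a b t, p = a :: b :: t := by
    match p, hlen with
    | a :: b :: t, _ => exact ⟨a, b, t, rfl⟩
  have hmono : ((a :: b :: t).map f).Pairwise (· < ·) :=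
    List.isChain_iff_pairwise.1 <| List.isChain_map_of_isChain f
      (fun v w hvw => hf (v, w) (Finset.mem_filter.2 hvw)) hp
  have hlast : a ∈ b :: t := by
    rw [List.head?_cons, List.getLast?_cons_cons, eq_comm] at hcycle
    exact List.mem_of_getLast? hcycle
  rw [List.map_cons, List.pairwise_cons] at hmono
  exact lt_irrefl _ (hmono.1 (f a) (List.mem_map_of_mem hlast))

def chainGraph (n : ℕ) : Dgraph where
  V := Finset.range (n + 1)
  nonempty := ⟨0, by simp⟩
  A := (Finset.range (n + 1) ×ˢ Finset.range (n + 1)).filter fun p => p.1 ≤ p.2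
  A_sub _ hp := Finset.mem_product.1 (Finset.mem_filter.1 hp).1

theorem mem_chainGraph_A {n a b : ℕ} : (a, b) ∈ (chainGraph n).A ↔ a ≤ b ∧ b ≤ n := by
  simp only [chainGraph, Finset.mem_filter, Finset.mem_product, Finset.mem_range]
  omega

theorem mem_chainGraph_Astar {n a b : ℕ} : (a, b) ∈ (chainGraph n).Astar ↔ a < b ∧ b ≤ n := by
  simp only [Astar, Finset.mem_filter, mem_chainGraph_A]
  omega

theorem chainGraph_isRefl (n : ℕ) : (chainGraph n).IsRefl := fun _ hv =>
  mem_chainGraph_A.2 ⟨le_rfl, Nat.le_of_lt_succ (Finset.mem_range.1 hv)⟩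

theorem chainGraph_memTa (n : ℕ) : (chainGraph n).MemTa :=
  memTa_of_lt_of_mem_Astar id fun _ hp => (mem_chainGraph_Astar.1 hp).1

theorem chainGraph_height (n : ℕ) : (chainGraph n).height = n := by
  obtain ⟨p, hp, hlen⟩ := exists_isPath_length_height (chainGraph n)
  have hrange : (chainGraph n).IsPath (List.range (n + 1)) := by
    refine ⟨by simp, List.nodup_range, fun v hv => Finset.mem_range.2 (List.mem_range.1 hv), ?_⟩
    exact (List.isChain_range_succ _ n).2 fun m hm => mem_chainGraph_A.2 ⟨m.le_succ, hm⟩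
  have h₁ : p.length ≤ n + 1 := (Finset.card_range (n + 1)).subst hp.length_le_card
  have h₂ := length_le_height hrange
  rw [List.length_range] at h₂
  omega

structure SplitArc (G : Dgraph) (x y m : ℕ) : Prop where
  arc : (x, y) ∈ G.A
  depth_left : G.depth x ≤ m
  depth_right : m < G.depth y
  depth_in : ∀ a, a ≠ x → a ≠ y → (a, x) ∈ G.A ∨ (a, y) ∈ G.A → G.depth a ≤ m
  depth_out : ∀ b, b ≠ x → b ≠ y → (x, b) ∈ G.A ∨ (y, b) ∈ G.A → m < G.depth b

noncomputable def squash (G : Dgraph) (x y m u : ℕ) : ℕ :=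
  if u ∈ G.V then
    if u = x ∨ u = y then m + 1 else if G.depth u ≤ m then G.depth u else G.depth u + 1
  else 0

namespace SplitArc

variable {x y m : ℕ}

theorem squash_lt (hG : G.MemTa) (h : G.SplitArc x y m) {u v : ℕ} (huv : (u, v) ∈ G.A)
    (hne : u ≠ v) (hxy : (u, v) ≠ (x, y)) : G.squash x y m u < G.squash x y m v := by
  have hlt := hG.depth_lt_depth huv hne
  have hx := h.depth_left
  have hy := h.depth_right
  simp only [squash, if_pos (G.A_sub _ huv).1, if_pos (G.A_sub _ huv).2]
  by_cases hu : u = x ∨ u = y <;> by_cases hv : v = x ∨ v = y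
  · exfalso
    rcases hu with rfl | rfl <;> rcases hv with rfl | rfl <;> first | omega | exact hxy rfl
  · obtain ⟨hvx, hvy⟩ := not_or.1 hv
    have := h.depth_out v hvx hvy (by rcases hu with rfl | rfl <;> simp [huv])
    rw [if_pos hu, if_neg hv, if_neg this.not_ge]
    omega
  · obtain ⟨hux, huy⟩ := not_or.1 hu
    have := h.depth_in u hux huy (by rcases hv with rfl | rfl <;> simp [huv])
    rw [if_neg hu, if_pos hv, if_pos this]
    omega
  · rw [if_neg hu, if_neg hv]
    split_ifs <;> omega

theorem squash_le_succ_height (h : G.SplitArc x y m) {u : ℕ} :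
    G.squash x y m u ≤ G.height + 1 := by
  have hy : G.depth y ≤ G.height := depth_le_height (G.A_sub _ h.arc).2
  have := h.depth_right
  unfold squash
  split_ifs with hu
  · omega
  · have := depth_le_height hu; omega
  · have := depth_le_height hu; omega
  · omega

theorem squash_left_eq_squash_right (h : G.SplitArc x y m) :
    G.squash x y m x = G.squash x y m y := by
  simp [squash, (G.A_sub _ h.arc).1, (G.A_sub _ h.arc).2]

theorem squash_mem_Hom (hG : G.MemTa) (h : G.SplitArc x y m) :
    G.squash x y m ∈ Hom G (chainGraph (G.height + 1)) := by
  refine ⟨fun u _ => Finset.mem_range.2 (Nat.lt_succ_of_le h.squash_le_succ_height),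
    fun ⟨u, v⟩ huv => mem_chainGraph_A.2 ⟨?_, h.squash_le_succ_height⟩,
    fun u hu => if_neg hu⟩
  by_cases hne : u = v
  · rw [hne]
  by_cases hxy : (u, v) = (x, y)
  · obtain ⟨rfl, rfl⟩ := Prod.mk.inj hxy
    exact h.squash_left_eq_squash_right.le
  exact (h.squash_lt hG huv hne hxy).le

theorem squash_notMem_SHom (h : G.SplitArc x y m) :
    G.squash x y m ∉ SHom G (chainGraph (G.height + 1)) := by
  have hne : x ≠ y := fun hxy => by
    have := h.depth_left
    have := h.depth_right
    subst hxy
    omega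
  exact fun hS => hS.2 (x, y) (Finset.mem_filter.2 ⟨h.arc, hne⟩)
    h.squash_left_eq_squash_right

theorem squash_mem_Astar_of_isPath (hG : G.MemTa) (h : G.SplitArc x y m) {P : List ℕ}
    (hP : G.IsPath P) (hxy : ¬(x ∈ P ∧ y ∈ P)) {i : ℕ} (hi : i + 1 < P.length) :
    (G.squash x y m (P.getD i 0), G.squash x y m (P.getD (i + 1) 0)) ∈
      (chainGraph (G.height + 1)).Astar := by
  rw [List.getD_eq_getElem _ _ (by omega), List.getD_eq_getElem _ _ hi]
  obtain ⟨harc, hne⟩ := List.isChain_iff_getElem.1 hP.isChain_proper i hi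
  refine mem_chainGraph_Astar.2 ⟨h.squash_lt hG harc hne fun heq => ?_, h.squash_le_succ_height⟩
  obtain ⟨hx, hy⟩ := Prod.mk.inj heq
  exact hxy ⟨hx ▸ List.getElem_mem _, hy ▸ List.getElem_mem _⟩

end SplitArc

theorem MemTa.exists_splitArc_of_arc_to (hG : G.MemTa) {v w : ℕ} (hwv : (w, v) ∈ G.A)
    (hne : w ≠ v) : ∃ x, G.SplitArc x v (G.depth x) := by
  obtain ⟨x, hxN, hmax⟩ := Finset.exists_max_image
    (G.V.filter fun a => (a, v) ∈ G.A ∧ a ≠ v) G.depth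
    ⟨w, Finset.mem_filter.2 ⟨(G.A_sub _ hwv).1, hwv, hne⟩⟩
  obtain ⟨-, hxv, hxne⟩ := Finset.mem_filter.1 hxN
  refine ⟨x, hxv, le_rfl, hG.depth_lt_depth hxv hxne, ?_, ?_⟩
  · rintro a hax hav (ha | ha)
    · exact (hG.depth_lt_depth ha hax).le
    · exact hmax a (Finset.mem_filter.2 ⟨(G.A_sub _ ha).1, ha, hav⟩)
  · rintro b hbx hbv (hb | hb)
    · exact hG.depth_lt_depth hb (Ne.symm hbx)
    · exact (hG.depth_lt_depth hxv hxne).trans (hG.depth_lt_depth hb (Ne.symm hbv))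

theorem MemTa.exists_splitArc_of_arc_from (hG : G.MemTa) {v w : ℕ} (hvw : (v, w) ∈ G.A)
    (hne : v ≠ w) : ∃ y, G.SplitArc v y (G.depth y - 1) := by
  obtain ⟨y, hyN, hmin⟩ := Finset.exists_min_image
    (G.V.filter fun b => (v, b) ∈ G.A ∧ v ≠ b) G.depth
    ⟨w, Finset.mem_filter.2 ⟨(G.A_sub _ hvw).2, hvw, hne⟩⟩
  obtain ⟨-, hvy, hyne⟩ := Finset.mem_filter.1 hyN
  have hlt := hG.depth_lt_depth hvy hyne
  refine ⟨y, hvy, by omega, by omega, ?_, ?_⟩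
  · rintro a hav hay (ha | ha)
    · have := hG.depth_lt_depth ha hav
      omega
    · have := hG.depth_lt_depth ha hay
      omega
  · rintro b hbv hby (hb | hb)
    · have := hmin b (Finset.mem_filter.2 ⟨(G.A_sub _ hb).2, hb, Ne.symm hbv⟩)
      omega
    · have := hG.depth_lt_depth hb (Ne.symm hby)
      omega

theorem MemTa.exists_splitArc (hG : G.MemTa) {v : ℕ}
    (hv : ∃ w, w ≠ v ∧ ((v, w) ∈ G.A ∨ (w, v) ∈ G.A)) :
    ∃ x y m, G.SplitArc x y m ∧ (v = x ∨ v = y) := by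
  obtain ⟨w, hne, hvw | hwv⟩ := hv
  · obtain ⟨y, h⟩ := hG.exists_splitArc_of_arc_from hvw (Ne.symm hne)
    exact ⟨v, y, _, h, Or.inl rfl⟩
  · obtain ⟨x, h⟩ := hG.exists_splitArc_of_arc_to hwv hne
    exact ⟨x, v, _, h, Or.inr rfl⟩

end Dgraph

open Dgraph

theorem stmt_9_general (G : Dgraph) (hG : G.MemTa)
    (hNoIso : ∀ v ∈ G.V, ∃ w, w ≠ v ∧ ((v, w) ∈ G.A ∨ (w, v) ∈ G.A))
    (hyp : ∀ H : Dgraph, H.MemTa → H.IsRefl →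
      (H.height = G.height ∨ H.height = G.height + 1) →
      ∀ ξ ∈ Hom G H,
        (ξ ∈ SHom G H ↔
          ∀ P : List ℕ, G.IsPath P → P.length = G.height + 1 →
            ∀ i, i + 1 < P.length →
              (ξ (P.getD i 0), ξ (P.getD (i + 1) 0)) ∈ H.Astar)) :
    MemTaEq G.height G := by
  refine ⟨hG, rfl, fun v hv => ?_⟩
  by_contra hv_off
  obtain ⟨x, y, m, h, hvxy⟩ := hG.exists_splitArc (hNoIso v hv)
  have hxy_off : ∀ P, G.IsPath P → P.length = G.height + 1 → ¬(x ∈ P ∧ y ∈ P) := by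
    rintro P hP hlen ⟨hx, hy⟩
    exact hv_off ⟨P, hP, hlen, by rcases hvxy with rfl | rfl <;> assumption⟩
  refine h.squash_notMem_SHom <| (hyp _ (chainGraph_memTa _) (chainGraph_isRefl _)
    (Or.inr (chainGraph_height _)) _ (h.squash_mem_Hom hG)).2 ?_
  exact fun P hP hlen _ hi => h.squash_mem_Astar_of_isPath hG hP (hxy_off P hP hlen) hi

theorem stmt_9 (G : Dgraph) (hG : G.MemTa)
    (hNoIso : ∀ v ∈ G.V, ∃ w, w ≠ v ∧ ((v, w) ∈ G.A ∨ (w, v) ∈ G.A))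
    (hh : 1 ≤ G.height)
    (hyp : ∀ H : Dgraph, H.MemTa → H.IsRefl →
      (H.height = G.height ∨ H.height = G.height + 1) →
      ∀ ξ ∈ Hom G H,
        (ξ ∈ SHom G H ↔
          ∀ P : List ℕ, G.IsPath P → P.length = G.height + 1 →
            ∀ i, i + 1 < P.length →
              (ξ (P.getD i 0), ξ (P.getD (i + 1) 0)) ∈ H.Astar)) :
    MemTaEq G.height G :=
  stmt_9_general G hG hNoIso hyp
end
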